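/- Realizability by an HMC. Let n ≥ 1, let (r_k)_{k≥0} be a covariance series and let (H,F,N) be a minimal realization of (r_k)_{k≥1}, with r₀ = r_0. Then there exist a real n×n matrix a, a real 1×n matrix b, a positive definite n×n matrix η, a positive semidefinite n×n matrix α and a real number β ≥ 0 such that η = α + a η aᵀ, r₀ = β + b η bᵀ, and r_k = b a^{k−1} (a η bᵀ) for all k ≥ 1, if and only if there exists a positive definite n×n matrix P̃ such that N = F P̃ Hᵀ, P̃ − F P̃ Fᵀ is positive semidefinite, and r₀ − H P̃ Hᵀ ≥ 0. -/

import Mathlib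

/-!
Both directions are a change of state coordinates. An HMC `(a, b, η, α, β)` gives a second
realization `(b, a, a η bᵀ)` of `(r_k)_{k ≥ 1}`. Its Hankel matrix `O' C'` (observability times
controllability) equals the invertible Hankel matrix `O C` of the minimal realization
`(H, F, N)`, so the second realization is minimal too, and `T = O⁻¹ O'` intertwines the two:
`H T = b`, `F T = T a`, `T (a η bᵀ) = N`. Then `P̃ = T η Tᵀ` works, because
`P̃ - F P̃ Fᵀ = T α Tᵀ` and `H P̃ Hᵀ = b η bᵀ`. Conversely, `(F, H, P̃, P̃ - F P̃ Fᵀ, r₀ - H P̃ Hᵀ)`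
is an HMC.
-/

open Matrix

/-- A real sequence is a covariance series iff all its Toeplitz matrices are
positive semidefinite. -/
def IsCovarianceSeries (r : ℕ → ℝ) : Prop :=
  ∀ m : ℕ,
    (Matrix.of fun i j : Fin (m + 1) => r ((i : ℤ) - (j : ℤ)).natAbs).PosSemidef

section Realization

variable {R : Type*} [CommRing R] {n : ℕ}

def observabilityMatrix (X : Matrix (Fin 1) (Fin n) R) (G : Matrix (Fin n) (Fin n) R) :
    Matrix (Fin n) (Fin n) R :=
  of fun i j => (X * G ^ (i : ℕ)) 0 j

def controllabilityMatrix (G : Matrix (Fin n) (Fin n) R) (Y : Matrix (Fin n) (Fin 1) R) :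
    Matrix (Fin n) (Fin n) R :=
  of fun i j => (G ^ (j : ℕ) * Y) i 0

lemma observabilityMatrix_mul_controllabilityMatrix (X : Matrix (Fin 1) (Fin n) R)
    (G : Matrix (Fin n) (Fin n) R) (Y : Matrix (Fin n) (Fin 1) R) :
    observabilityMatrix X G * controllabilityMatrix G Y =
      of fun i j : Fin n => (X * G ^ ((i : ℕ) + j) * Y) 0 0 := by
  ext i j
  rw [of_apply, pow_add, ← Matrix.mul_assoc, Matrix.mul_assoc _ _ Y, mul_apply, mul_apply]
  rfl

lemma mul_controllabilityMatrix (G : Matrix (Fin n) (Fin n) R) (Y : Matrix (Fin n) (Fin 1) R) :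
    G * controllabilityMatrix G Y = controllabilityMatrix G (G * Y) := by
  ext i j
  change ∑ k, G i k * (G ^ (j : ℕ) * Y) k 0 = (G ^ (j : ℕ) * (G * Y)) i 0
  rw [← Matrix.mul_assoc, ← pow_succ, pow_succ', Matrix.mul_assoc, mul_apply]

lemma observabilityMatrix_mul_controllabilityMatrix_eq_of_markov_eq
    {X X' : Matrix (Fin 1) (Fin n) R} {G G' : Matrix (Fin n) (Fin n) R}
    {Y Y' : Matrix (Fin n) (Fin 1) R} (h : ∀ k : ℕ, X * G ^ k * Y = X' * G' ^ k * Y') :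
    observabilityMatrix X G * controllabilityMatrix G Y =
      observabilityMatrix X' G' * controllabilityMatrix G' Y' := by
  simp only [observabilityMatrix_mul_controllabilityMatrix, h]

lemma mul_eq_of_observabilityMatrix_mul_eq {X X' : Matrix (Fin 1) (Fin n) R}
    {G G' T : Matrix (Fin n) (Fin n) R}
    (h : observabilityMatrix X G * T = observabilityMatrix X' G') : X * T = X' := by
  ext i j
  have h₀ := congr_fun₂ h ⟨0, j.pos⟩ j
  rw [mul_apply] at h₀
  simp only [observabilityMatrix, of_apply, pow_zero, Matrix.mul_one] at h₀
  rwa [Subsingleton.elim i 0, mul_apply]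

lemma mul_eq_of_mul_controllabilityMatrix_eq {Y Y' : Matrix (Fin n) (Fin 1) R}
    {G G' T : Matrix (Fin n) (Fin n) R}
    (h : T * controllabilityMatrix G Y = controllabilityMatrix G' Y') : T * Y = Y' := by
  ext i j
  have h₀ := congr_fun₂ h i ⟨0, i.pos⟩
  rw [mul_apply] at h₀
  simp only [controllabilityMatrix, of_apply, pow_zero, Matrix.one_mul] at h₀
  rwa [Subsingleton.elim j 0, mul_apply]

theorem exists_similarity_of_markov_eq {H b : Matrix (Fin 1) (Fin n) R}
    {F a : Matrix (Fin n) (Fin n) R} {N M : Matrix (Fin n) (Fin 1) R}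
    (hobs : IsUnit (observabilityMatrix H F)) (hctr : IsUnit (controllabilityMatrix F N))
    (h : ∀ k : ℕ, H * F ^ k * N = b * a ^ k * M) :
    ∃ T : Matrix (Fin n) (Fin n) R, IsUnit T ∧ H * T = b ∧ F * T = T * a ∧ T * M = N := by
  set O := observabilityMatrix H F
  set C := controllabilityMatrix F N
  set O' := observabilityMatrix b a
  set C' := controllabilityMatrix a M
  have hOC : O * C = O' * C' := observabilityMatrix_mul_controllabilityMatrix_eq_of_markov_eq h
  have hOFC : O * (F * C) = O' * (a * C') := by
    simp only [C, C', mul_controllabilityMatrix]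
    refine observabilityMatrix_mul_controllabilityMatrix_eq_of_markov_eq fun k => ?_
    simpa only [pow_succ, Matrix.mul_assoc] using h (k + 1)
  have hC' : IsUnit C' := isUnit_of_mul_isUnit_right (hOC ▸ hobs.mul hctr)
  obtain ⟨Oinv, hOinv⟩ := hobs.exists_right_inv
  set T := Oinv * O'
  have hOT : O * T = O' := by rw [← Matrix.mul_assoc, hOinv, Matrix.one_mul]
  have hTC' : T * C' = C := hobs.mul_left_cancel (by rw [← Matrix.mul_assoc, hOT, hOC])
  have hFT : F * T = T * a := by
    refine hC'.mul_right_cancel (hobs.mul_left_cancel ?_)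
    rw [Matrix.mul_assoc, hTC', hOFC, Matrix.mul_assoc, ← Matrix.mul_assoc O, hOT]
  exact ⟨T, isUnit_of_mul_isUnit_left (hTC' ▸ hctr), mul_eq_of_observabilityMatrix_mul_eq hOT,
    hFT, mul_eq_of_mul_controllabilityMatrix_eq hTC'⟩

lemma mul_mul_transpose_sub_of_mul_eq_mul {T F a : Matrix (Fin n) (Fin n) R}
    (η : Matrix (Fin n) (Fin n) R) (hFT : F * T = T * a) :
    T * η * Tᵀ - F * (T * η * Tᵀ) * Fᵀ = T * (η - a * η * aᵀ) * Tᵀ := by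
  have hFTt : Tᵀ * Fᵀ = aᵀ * Tᵀ := by rw [← transpose_mul, hFT, transpose_mul]
  rw [Matrix.mul_sub, Matrix.sub_mul]
  simp only [Matrix.mul_assoc]
  rw [hFTt, ← Matrix.mul_assoc F T, hFT]
  simp only [Matrix.mul_assoc]

end Realization

lemma Matrix.PosDef.mul_mul_transpose_of_isUnit {n : Type*} [Fintype n] [DecidableEq n]
    {η T : Matrix n n ℝ} (hη : η.PosDef) (hT : IsUnit T) : (T * η * Tᵀ).PosDef := by
  simpa only [conjTranspose_eq_transpose_of_trivial] using
    hη.mul_mul_conjTranspose_same (vecMul_injective_iff_isUnit.2 hT)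

lemma Matrix.PosSemidef.mul_mul_transpose {n : Type*} [Fintype n] {α : Matrix n n ℝ}
    (hα : α.PosSemidef) (T : Matrix n n ℝ) : (T * α * Tᵀ).PosSemidef := by
  simpa only [conjTranspose_eq_transpose_of_trivial] using hα.mul_mul_conjTranspose_same T

theorem stmt_9 {n : ℕ} (r : ℕ → ℝ)
    (H : Matrix (Fin 1) (Fin n) ℝ) (F : Matrix (Fin n) (Fin n) ℝ)
    (N : Matrix (Fin n) (Fin 1) ℝ) (r0 : ℝ)
    (hrk : ∀ k : ℕ, 1 ≤ k → r k = (H * F ^ (k - 1) * N) 0 0)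
    (hobs : IsUnit (Matrix.of fun i j : Fin n => (H * F ^ (i : ℕ)) 0 j))
    (hctr : IsUnit (Matrix.of fun i j : Fin n => (F ^ (j : ℕ) * N) i 0)) :
    (∃ (a : Matrix (Fin n) (Fin n) ℝ) (b : Matrix (Fin 1) (Fin n) ℝ)
        (η α : Matrix (Fin n) (Fin n) ℝ) (β : ℝ),
        η.PosDef ∧ α.PosSemidef ∧ 0 ≤ β ∧
        η = α + a * η * aᵀ ∧
        r0 = β + (b * η * bᵀ) 0 0 ∧
        ∀ k : ℕ, 1 ≤ k → r k = (b * a ^ (k - 1) * (a * η * bᵀ)) 0 0) ↔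
      ∃ P : Matrix (Fin n) (Fin n) ℝ, P.PosDef ∧
        N = F * P * Hᵀ ∧
        (P - F * P * Fᵀ).PosSemidef ∧
        0 ≤ r0 - (H * P * Hᵀ) 0 0 := by
  constructor
  · rintro ⟨a, b, η, α, β, hη, hα, hβ, hstat, hr0, hrk'⟩
    have hmarkov : ∀ k : ℕ, H * F ^ k * N = b * a ^ k * (a * η * bᵀ) := fun k => by
      ext i j
      rw [Subsingleton.elim i 0, Subsingleton.elim j 0]
      simpa using (hrk (k + 1) (by omega)).symm.trans (hrk' (k + 1) (by omega))
    obtain ⟨T, hT, hHT, hFT, hTM⟩ := exists_similarity_of_markov_eq hobs hctr hmarkov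
    have hHP : H * (T * η * Tᵀ) * Hᵀ = b * η * bᵀ := by
      rw [← hHT]
      simp only [transpose_mul, Matrix.mul_assoc]
    refine ⟨T * η * Tᵀ, hη.mul_mul_transpose_of_isUnit hT, ?_, ?_, by rw [hHP]; linarith⟩
    · rw [← hTM, ← hHT]
      simp only [transpose_mul, Matrix.mul_assoc]
      rw [← Matrix.mul_assoc F T, hFT, Matrix.mul_assoc]
    · rw [mul_mul_transpose_sub_of_mul_eq_mul η hFT, ← eq_sub_of_add_eq hstat.symm]
      exact hα.mul_mul_transpose T
  · rintro ⟨P, hP, hN, hPF, hr0⟩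
    refine ⟨F, H, P, P - F * P * Fᵀ, r0 - (H * P * Hᵀ) 0 0, hP, hPF, hr0, by abel, by ring,
      fun k hk => ?_⟩
    rw [hrk k hk, hN, Matrix.mul_assoc]
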